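/- arXiv:2009.07520 — 3 statements merged into one kernel-verified Lean document; each statement's English description precedes it below -/
import Mathlib

section
/- Let d ≤ n be positive integers, σ > 0, U ∈ St(d,n), Σ ∈ SPD(d), μ ∈ ℝ^d and b ∈ ℝ^n. With Σ̃ := ((1/σ²)(I_n − UUᵀ) + U Σ⁻¹ Uᵀ)⁻¹ and μ̃ := Σ̃ U Σ⁻¹ μ + b, one has Σ̃ U = U Σ; consequently Uᵀ Σ̃ U = Σ, Uᵀ Σ̃⁻¹ U = Σ⁻¹, and μ̃ = U μ + b. -/
/-!
With `P := 1 - U Uᵀ` the projection onto the orthogonal complement of the range of `U`,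
every matrix of the form `c • P + U A Uᵀ` acts as `c` on that complement and as `A` on the
range (in the coordinates given by `U`). Such matrices therefore multiply componentwise,
so `Σ̃⁻¹ = σ⁻² P + U Σ⁻¹ Uᵀ` is inverted to `Σ̃ = σ² P + U Σ Uᵀ`, and every claimed identity
is read off from `P U = 0` and `Uᵀ U = 1`.
-/

open Matrix

namespace Matrix

variable {m k R K : Type*} [Fintype k] [DecidableEq m]

section CommRing

variable [CommRing R] {U : Matrix m k R}

def orthExtend (U : Matrix m k R) (c : R) (A : Matrix k k R) : Matrix m m R :=
  c • (1 - U * Uᵀ) + U * A * Uᵀ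

variable [DecidableEq k]

@[simp]
theorem orthExtend_one_one (U : Matrix m k R) : orthExtend U 1 1 = 1 := by
  simp [orthExtend]

variable [Fintype m]

theorem one_sub_mul_transpose_mul_self (hU : Uᵀ * U = 1) : (1 - U * Uᵀ) * U = 0 := by
  rw [Matrix.sub_mul, Matrix.one_mul, Matrix.mul_assoc, hU, Matrix.mul_one, sub_self]

theorem transpose_mul_one_sub_mul_transpose (hU : Uᵀ * U = 1) : Uᵀ * (1 - U * Uᵀ) = 0 := by
  rw [Matrix.mul_sub, Matrix.mul_one, ← Matrix.mul_assoc, hU, Matrix.one_mul, sub_self]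

theorem orthExtend_mul_self (hU : Uᵀ * U = 1) (c : R) (A : Matrix k k R) :
    orthExtend U c A * U = U * A := by
  rw [orthExtend, Matrix.add_mul, Matrix.smul_mul, one_sub_mul_transpose_mul_self hU, smul_zero,
    zero_add, Matrix.mul_assoc, hU, Matrix.mul_one]

theorem transpose_mul_orthExtend_mul_self (hU : Uᵀ * U = 1) (c : R) (A : Matrix k k R) :
    Uᵀ * orthExtend U c A * U = A := by
  rw [Matrix.mul_assoc, orthExtend_mul_self hU, ← Matrix.mul_assoc, hU, Matrix.one_mul]

theorem orthExtend_mul_orthExtend (hU : Uᵀ * U = 1) (a b : R) (A B : Matrix k k R) :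
    orthExtend U a A * orthExtend U b B = orthExtend U (a * b) (A * B) := by
  have hPP : (1 - U * Uᵀ) * (1 - U * Uᵀ) = 1 - U * Uᵀ := by
    rw [Matrix.mul_sub, Matrix.mul_one, ← Matrix.mul_assoc, one_sub_mul_transpose_mul_self hU,
      Matrix.zero_mul, sub_zero]
  have hPU : (1 - U * Uᵀ) * (U * B * Uᵀ) = 0 := by
    rw [← Matrix.mul_assoc, ← Matrix.mul_assoc, one_sub_mul_transpose_mul_self hU,
      Matrix.zero_mul, Matrix.zero_mul]
  have hUP : U * A * Uᵀ * (1 - U * Uᵀ) = 0 := by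
    rw [Matrix.mul_assoc, transpose_mul_one_sub_mul_transpose hU, Matrix.mul_zero]
  have hUU : U * A * Uᵀ * (U * B * Uᵀ) = U * (A * B) * Uᵀ := by
    simp only [Matrix.mul_assoc, ← Matrix.mul_assoc Uᵀ U, hU, Matrix.one_mul]
  simp only [orthExtend, Matrix.add_mul, Matrix.mul_add, Matrix.smul_mul, Matrix.mul_smul,
    smul_smul, hPP, hPU, hUP, hUU, smul_zero, add_zero, zero_add, mul_comm b a]

end CommRing

theorem inv_orthExtend [DecidableEq k] [Fintype m] [Field K] {U : Matrix m k K} (hU : Uᵀ * U = 1) {c : K} (hc : c ≠ 0)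
    {A : Matrix k k K} (hA : IsUnit A.det) :
    (orthExtend U c A)⁻¹ = orthExtend U c⁻¹ A⁻¹ :=
  inv_eq_right_inv <| by
    rw [orthExtend_mul_orthExtend hU, mul_inv_cancel₀ hc, mul_nonsing_inv _ hA,
      orthExtend_one_one]

end Matrix

theorem stmt_3_general (d n : ℕ)
    (σ : ℝ) (hσ : 0 < σ)
    (U : Matrix (Fin n) (Fin d) ℝ) (hU : Uᵀ * U = 1)
    (Sig : Matrix (Fin d) (Fin d) ℝ) (hSig : Sig.PosDef)
    (μ : Fin d → ℝ) (b : Fin n → ℝ)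
    (tSig : Matrix (Fin n) (Fin n) ℝ)
    (htSig : tSig = ((σ ^ 2)⁻¹ • ((1 : Matrix (Fin n) (Fin n) ℝ) - U * Uᵀ) + U * Sig⁻¹ * Uᵀ)⁻¹)
    (tmu : Fin n → ℝ) (htmu : tmu = tSig *ᵥ (U *ᵥ (Sig⁻¹ *ᵥ μ)) + b) :
    tSig * U = U * Sig ∧ Uᵀ * tSig * U = Sig ∧ Uᵀ * tSig⁻¹ * U = Sig⁻¹ ∧
      tmu = U *ᵥ μ + b := by
  have hSig_det : IsUnit Sig.det := isUnit_iff_ne_zero.2 hSig.det_pos.ne'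
  have hσ_inv : (σ ^ 2)⁻¹ ≠ 0 := by positivity
  have htSig_eq : tSig = orthExtend U (σ ^ 2) Sig := by
    rw [htSig, ← orthExtend, inv_orthExtend hU hσ_inv (isUnit_nonsing_inv_det _ hSig_det),
      inv_inv, nonsing_inv_nonsing_inv _ hSig_det]
  have htSig_inv : tSig⁻¹ = orthExtend U (σ ^ 2)⁻¹ Sig⁻¹ := by
    rw [htSig_eq, inv_orthExtend hU (by positivity) hSig_det]
  have htSig_U : tSig * U = U * Sig := by rw [htSig_eq, orthExtend_mul_self hU]
  refine ⟨htSig_U, ?_, ?_, ?_⟩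
  · rw [htSig_eq, transpose_mul_orthExtend_mul_self hU]
  · rw [htSig_inv, transpose_mul_orthExtend_mul_self hU]
  · rw [htmu, mulVec_mulVec, mulVec_mulVec, htSig_U, Matrix.mul_assoc,
      mul_nonsing_inv _ hSig_det, Matrix.mul_one]

theorem stmt_3 (d n : ℕ) (hd : 0 < d) (hn : 0 < n) (hdn : d ≤ n)
    (σ : ℝ) (hσ : 0 < σ)
    (U : Matrix (Fin n) (Fin d) ℝ) (hU : Uᵀ * U = 1)
    (Sig : Matrix (Fin d) (Fin d) ℝ) (hSig : Sig.PosDef)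
    (μ : Fin d → ℝ) (b : Fin n → ℝ)
    (tSig : Matrix (Fin n) (Fin n) ℝ)
    (htSig : tSig = ((σ ^ 2)⁻¹ • ((1 : Matrix (Fin n) (Fin n) ℝ) - U * Uᵀ) + U * Sig⁻¹ * Uᵀ)⁻¹)
    (tmu : Fin n → ℝ) (htmu : tmu = tSig *ᵥ (U *ᵥ (Sig⁻¹ *ᵥ μ)) + b) :
    tSig * U = U * Sig ∧ Uᵀ * tSig * U = Sig ∧ Uᵀ * tSig⁻¹ * U = Sig⁻¹ ∧
      tmu = U *ᵥ μ + b :=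
  stmt_3_general d n σ hσ U hU Sig hSig μ b tSig htSig tmu htmu
end

section
/- Let d ≤ n be positive integers and σ > 0. Then the set { ((1/σ²)(I_n − UUᵀ) + U Σ⁻¹ Uᵀ)⁻¹ : U ∈ St(d,n), Σ ∈ SPD(d) } equals the set { Qᵀ D Q : Q ∈ O(n), λ ∈ ℝ^d with all entries positive }, where D is the block-diagonal n×n matrix with upper-left d×d block diag(λ₁,…,λ_d) and lower-right (n−d)×(n−d) block σ² I_{n−d}. -/
/-!
With `c = σ²`, the matrix `c⁻¹ (I - UUᵀ) + U S⁻¹ Uᵀ` acts as `c⁻¹` on the orthogonal complement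
of the column space of `U` and as `S⁻¹` (in the basis `U`) on that column space, so its inverse
is `c (I - UUᵀ) + U S Uᵀ`. Diagonalising `S = V Λ Vᵀ` replaces `U` by the Stiefel matrix `UV`,
whose columns extend to an orthogonal matrix `P`; in the basis given by the columns of `P` the
matrix becomes `diag(Λ, c I)`. Conversely `Qᵀ diag(Λ, c I) Q` arises from `U = Qᵀ [I_d; 0]`
and `S = Λ`.
-/

open Matrix

def Fin.padConst {α : Type*} {d n : ℕ} (v : Fin d → α) (c : α) (i : Fin n) : α :=
  if h : (i : ℕ) < d then v ⟨i, h⟩ else c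

namespace Matrix

def leadingIdCols (R : Type*) [Zero R] [One R] {d n : ℕ} (hdn : d ≤ n) :
    Matrix (Fin n) (Fin d) R :=
  (1 : Matrix (Fin n) (Fin n) R).submatrix id (Fin.castLE hdn)

theorem transpose_mul_self_mul_eq_one {R : Type*} [CommRing R] {m k l : Type*} [Fintype m]
    [Fintype k] [DecidableEq k] [DecidableEq l] {U : Matrix m k R} {V : Matrix k l R}
    (hU : Uᵀ * U = 1) (hV : Vᵀ * V = 1) : (U * V)ᵀ * (U * V) = 1 := by
  rw [transpose_mul, Matrix.mul_assoc, ← Matrix.mul_assoc Uᵀ, hU, Matrix.one_mul, hV]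

section IsoPlusLowRank

variable {R : Type*} [CommRing R] {m k : Type*} [DecidableEq m] [Fintype k]

def isoPlusLowRank (c : R) (U : Matrix m k R) (A : Matrix k k R) : Matrix m m R :=
  c • (1 - U * Uᵀ) + U * A * Uᵀ

theorem isoPlusLowRank_mul_left [Fintype m] {U : Matrix m k R} {P : Matrix m m R}
    (hP : P * Pᵀ = 1) (c : R) (A : Matrix k k R) :
    isoPlusLowRank c (P * U) A = P * isoPlusLowRank c U A * Pᵀ := by
  simp only [isoPlusLowRank, transpose_mul, Matrix.mul_add, Matrix.add_mul, Matrix.mul_smul,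
    Matrix.smul_mul, Matrix.mul_sub, Matrix.sub_mul, Matrix.mul_one, hP, Matrix.mul_assoc]

theorem isoPlusLowRank_mul_right [DecidableEq k] {U : Matrix m k R} {V : Matrix k k R}
    (hV : V * Vᵀ = 1) (c : R) (A : Matrix k k R) :
    isoPlusLowRank c (U * V) A = isoPlusLowRank c U (V * A * Vᵀ) := by
  simp only [isoPlusLowRank, transpose_mul, Matrix.mul_assoc]
  rw [← Matrix.mul_assoc V, hV, Matrix.one_mul]

theorem isoPlusLowRank_inv {K : Type*} [Field K] [Fintype m] [DecidableEq k] {U : Matrix m k K}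
    (hU : Uᵀ * U = 1) {c : K} (hc : c ≠ 0) {A : Matrix k k K} (hA : IsUnit A.det) :
    (isoPlusLowRank c U A)⁻¹ = isoPlusLowRank c⁻¹ U A⁻¹ := by
  have hKU (X : Matrix k m K) : (1 - U * Uᵀ) * (U * X) = 0 := by
    rw [← Matrix.mul_assoc, Matrix.sub_mul, Matrix.mul_assoc, hU, Matrix.one_mul, Matrix.mul_one,
      sub_self, Matrix.zero_mul]
  have hUK : Uᵀ * (1 - U * Uᵀ) = 0 := by
    rw [Matrix.mul_sub, ← Matrix.mul_assoc, hU, Matrix.one_mul, Matrix.mul_one, sub_self]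
  have hKK : (1 - U * Uᵀ) * (1 - U * Uᵀ) = 1 - U * Uᵀ := by
    rw [Matrix.mul_sub (1 - U * Uᵀ), hKU, Matrix.mul_one, sub_zero]
  have hUU (X : Matrix k m K) : Uᵀ * (U * X) = X := by
    rw [← Matrix.mul_assoc, hU, Matrix.one_mul]
  have hAA (X : Matrix k m K) : A * (A⁻¹ * X) = X := by
    rw [← Matrix.mul_assoc, mul_nonsing_inv A hA, Matrix.one_mul]
  apply inv_eq_right_inv
  simp only [isoPlusLowRank, Matrix.mul_add, Matrix.add_mul, Matrix.smul_mul, Matrix.mul_smul,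
    Matrix.mul_assoc, hKK, hKU, hUK, hUU, hAA, smul_smul, inv_mul_cancel₀ hc, one_smul,
    smul_zero, Matrix.mul_zero, add_zero, zero_add, sub_add_cancel]

end IsoPlusLowRank

section LeadingIdCols

variable {R : Type*} [CommRing R] {d n : ℕ}

theorem transpose_leadingIdCols_mul_self (hdn : d ≤ n) :
    (leadingIdCols R hdn)ᵀ * leadingIdCols R hdn = 1 := by
  rw [leadingIdCols, transpose_submatrix, transpose_one,
    ← submatrix_mul _ _ _ _ _ Function.bijective_id, Matrix.one_mul,
    submatrix_one _ (Fin.castLE_injective hdn)]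

theorem leadingIdCols_mul_diagonal_mul_transpose (hdn : d ≤ n) (v : Fin d → R) :
    leadingIdCols R hdn * diagonal v * (leadingIdCols R hdn)ᵀ = diagonal (Fin.padConst v 0) := by
  ext i k
  rw [mul_apply]
  simp only [leadingIdCols, mul_diagonal, submatrix_apply, id, one_apply, transpose_apply,
    diagonal_apply, Fin.padConst]
  by_cases hi : (i : ℕ) < d
  · have hcast (j : Fin d) : i = Fin.castLE hdn j ↔ ⟨i, hi⟩ = j := by simp [Fin.ext_iff]
    have hcast_self : Fin.castLE hdn ⟨i, hi⟩ = i := rfl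
    simp only [hcast, ite_mul, one_mul, zero_mul, mul_ite, mul_one, mul_zero]
    rw [Finset.sum_eq_single ⟨i, hi⟩ (fun j _ hj => by simp [Ne.symm hj]) (by simp), hcast_self]
    simp [hi, eq_comm]
  · have hcast (j : Fin d) : i ≠ Fin.castLE hdn j := fun h => hi (h ▸ j.isLt)
    simp [hcast, hi]

theorem isoPlusLowRank_leadingIdCols_diagonal (hdn : d ≤ n) (c : R) (v : Fin d → R) :
    isoPlusLowRank c (leadingIdCols R hdn) (diagonal v) = diagonal (Fin.padConst v c) := by
  have hEEt : leadingIdCols R hdn * (leadingIdCols R hdn)ᵀ =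
      diagonal (Fin.padConst (1 : Fin d → R) 0) := by
    simpa using leadingIdCols_mul_diagonal_mul_transpose (R := R) hdn 1
  rw [isoPlusLowRank, hEEt, leadingIdCols_mul_diagonal_mul_transpose, ← diagonal_one,
    diagonal_sub, ← diagonal_smul, diagonal_add]
  congr 1
  ext i
  by_cases hi : (i : ℕ) < d <;> simp [Fin.padConst, hi]

end LeadingIdCols

theorem orthonormal_toLp_transpose {m k : Type*} [Fintype m] [DecidableEq k]
    {W : Matrix m k ℝ} (hW : Wᵀ * W = 1) :
    Orthonormal ℝ fun j => WithLp.toLp 2 (Wᵀ j) := by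
  rw [orthonormal_iff_ite]
  intro i j
  rw [EuclideanSpace.inner_toLp_toLp, star_trivial, dotProduct_comm, ← one_apply, ← hW]
  rfl

theorem PosDef.exists_eq_mul_diagonal_mul_transpose {ι : Type*} [Fintype ι]
    [DecidableEq ι] {S : Matrix ι ι ℝ} (hS : S.PosDef) :
    ∃ V : Matrix ι ι ℝ, ∃ ev : ι → ℝ,
      V * Vᵀ = 1 ∧ (∀ i, 0 < ev i) ∧ S = V * diagonal ev * Vᵀ := by
  set V := hS.isHermitian.eigenvectorUnitary
  have hstar : star (V : Matrix ι ι ℝ) = (V : Matrix ι ι ℝ)ᵀ := by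
    rw [star_eq_conjTranspose, conjTranspose_eq_transpose_of_trivial]
  refine ⟨V, hS.isHermitian.eigenvalues, ?_, hS.eigenvalues_pos, ?_⟩
  · rw [← hstar]
    exact Unitary.mul_star_self_of_mem V.2
  · conv_lhs => rw [hS.isHermitian.spectral_theorem]
    simp [hstar, V]

theorem exists_orthogonal_mul_leadingIdCols_eq {d n : ℕ} (hdn : d ≤ n)
    {W : Matrix (Fin n) (Fin d) ℝ} (hW : Wᵀ * W = 1) :
    ∃ P : Matrix (Fin n) (Fin n) ℝ, P * Pᵀ = 1 ∧ P * leadingIdCols ℝ hdn = W := by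
  set w : Fin d → EuclideanSpace ℝ (Fin n) := fun j => WithLp.toLp 2 (Wᵀ j)
  set s : Set (Fin n) := {i | (i : ℕ) < d}
  have hs : s.domRestrict (Fin.padConst w 0) = w ∘ fun i => ⟨i.1, i.2⟩ := by
    ext1 ⟨i, hi⟩; exact dif_pos hi
  have hws : Orthonormal ℝ (s.domRestrict (Fin.padConst w 0)) := by
    rw [hs]
    refine (orthonormal_toLp_transpose hW).comp _ fun i j h => ?_
    simpa [Fin.ext_iff, Subtype.ext_iff] using h
  obtain ⟨b, hb⟩ := hws.exists_orthonormalBasis_extension_of_card_eq (by simp)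
  refine ⟨(EuclideanSpace.basisFun (Fin n) ℝ).toBasis.toMatrix b, ?_, ?_⟩
  · simpa [conjTranspose_eq_transpose_of_trivial] using
      (EuclideanSpace.basisFun (Fin n) ℝ).toMatrix_orthonormalBasis_self_mul_conjTranspose b
  · ext r j
    have hj : Fin.castLE hdn j ∈ s := j.isLt
    rw [leadingIdCols, ← submatrix_id_id (Module.Basis.toMatrix _ _),
      ← submatrix_mul _ _ _ _ _ Function.bijective_id, Matrix.mul_one, submatrix_apply, id,
      Module.Basis.toMatrix_apply, hb _ hj]
    simp [Fin.padConst, w]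

end Matrix

theorem stmt_6_general (d n : ℕ) (hdn : d ≤ n)
    (σ : ℝ) (hσ : 0 < σ) :
    {M : Matrix (Fin n) (Fin n) ℝ |
        ∃ (U : Matrix (Fin n) (Fin d) ℝ) (S : Matrix (Fin d) (Fin d) ℝ),
          Uᵀ * U = 1 ∧ S.PosDef ∧
          M = ((σ ^ 2)⁻¹ • ((1 : Matrix (Fin n) (Fin n) ℝ) - U * Uᵀ) + U * S⁻¹ * Uᵀ)⁻¹} =
      {M : Matrix (Fin n) (Fin n) ℝ |
        ∃ (Q : Matrix (Fin n) (Fin n) ℝ) (lam : Fin d → ℝ),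
          Qᵀ * Q = 1 ∧ (∀ i, 0 < lam i) ∧
          M = Qᵀ * Matrix.diagonal
                (fun i : Fin n => if h : (i : ℕ) < d then lam ⟨i, h⟩ else σ ^ 2) * Q} := by
  have hinv {U : Matrix (Fin n) (Fin d) ℝ} {S : Matrix (Fin d) (Fin d) ℝ} (hU : Uᵀ * U = 1)
      (hS : S.PosDef) :
      ((σ ^ 2)⁻¹ • (1 - U * Uᵀ) + U * S⁻¹ * Uᵀ)⁻¹ = isoPlusLowRank (σ ^ 2) U S := by
    change (isoPlusLowRank (σ ^ 2)⁻¹ U S⁻¹)⁻¹ = _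
    have hSdet : IsUnit S.det := (isUnit_iff_isUnit_det S).mp hS.isUnit
    rw [isoPlusLowRank_inv hU (by positivity) (isUnit_nonsing_inv_det _ hSdet), inv_inv,
      nonsing_inv_nonsing_inv _ hSdet]
  ext M
  constructor
  · rintro ⟨U, S, hU, hS, rfl⟩
    obtain ⟨V, ev, hV, hev, hSV⟩ := hS.exists_eq_mul_diagonal_mul_transpose
    obtain ⟨P, hP, hPE⟩ := exists_orthogonal_mul_leadingIdCols_eq hdn
      (transpose_mul_self_mul_eq_one hU (mul_eq_one_comm.mp hV))
    refine ⟨Pᵀ, ev, by rwa [transpose_transpose], hev, ?_⟩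
    rw [hinv hU hS, hSV, ← isoPlusLowRank_mul_right hV, ← hPE, isoPlusLowRank_mul_left hP,
      isoPlusLowRank_leadingIdCols_diagonal, transpose_transpose]
    rfl
  · rintro ⟨Q, lam, hQ, hlam, rfl⟩
    have hQQt : Q * Qᵀ = 1 := mul_eq_one_comm.mp hQ
    have hU : (Qᵀ * leadingIdCols ℝ hdn)ᵀ * (Qᵀ * leadingIdCols ℝ hdn) = 1 :=
      transpose_mul_self_mul_eq_one (by rwa [transpose_transpose])
        (transpose_leadingIdCols_mul_self hdn)
    have hS : (diagonal lam).PosDef := posDef_diagonal_iff.mpr hlam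
    refine ⟨_, _, hU, hS, ?_⟩
    rw [hinv hU hS, isoPlusLowRank_mul_left (by rwa [transpose_transpose]),
      isoPlusLowRank_leadingIdCols_diagonal, transpose_transpose]
    rfl

theorem stmt_6 (d n : ℕ) (hd : 0 < d) (hn : 0 < n) (hdn : d ≤ n)
    (σ : ℝ) (hσ : 0 < σ) :
    {M : Matrix (Fin n) (Fin n) ℝ |
        ∃ (U : Matrix (Fin n) (Fin d) ℝ) (S : Matrix (Fin d) (Fin d) ℝ),
          Uᵀ * U = 1 ∧ S.PosDef ∧
          M = ((σ ^ 2)⁻¹ • ((1 : Matrix (Fin n) (Fin n) ℝ) - U * Uᵀ) + U * S⁻¹ * Uᵀ)⁻¹} =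
      {M : Matrix (Fin n) (Fin n) ℝ |
        ∃ (Q : Matrix (Fin n) (Fin n) ℝ) (lam : Fin d → ℝ),
          Qᵀ * Q = 1 ∧ (∀ i, 0 < lam i) ∧
          M = Qᵀ * Matrix.diagonal
                (fun i : Fin n => if h : (i : ℕ) < d then lam ⟨i, h⟩ else σ ^ 2) * Q} :=
  stmt_6_general d n hdn σ hσ
end

section
/- Let d ≤ n be positive integers, σ > 0, x₁,…,x_N ∈ ℝ^n, β₁,…,β_N > 0 with α := Σᵢβᵢ, m := Σᵢβᵢxᵢ, C := Σᵢβᵢxᵢxᵢᵀ, and for b ∈ ℝ^n set v(b) := m − αb and S(b) := C − mbᵀ − bmᵀ + αbbᵀ. Assume S(b) is positive definite for every b ∈ ℝ^n. Then the function G(U,b) := −(1/σ²)(trace(UᵀS(b)U) − ‖v(b)‖²/α) − v(b)ᵀU(UᵀS(b)U)⁻¹Uᵀv(b) + α log det(UᵀS(b)U) attains a global minimum on St(d,n) × ℝ^n; that is, there exists (Û, b̂) ∈ St(d,n) × ℝ^n with G(Û, b̂) ≤ G(U, b) for all U ∈ St(d,n) and b ∈ ℝ^n. -/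
open Matrix

/-- `m = Σᵢ βᵢ xᵢ`. -/
noncomputable def mVec {n N : ℕ} (x : Fin N → Fin n → ℝ) (β : Fin N → ℝ) : Fin n → ℝ :=
  ∑ i, β i • x i

/-- `v(b) = m − α b`. -/
noncomputable def vVec {n N : ℕ} (x : Fin N → Fin n → ℝ) (β : Fin N → ℝ) (b : Fin n → ℝ) :
    Fin n → ℝ :=
  mVec x β - (∑ i, β i) • b

/-- `S(b) = C − m bᵀ − b mᵀ + α b bᵀ`. -/
noncomputable def sMat {n N : ℕ} (x : Fin N → Fin n → ℝ) (β : Fin N → ℝ) (b : Fin n → ℝ) :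
    Matrix (Fin n) (Fin n) ℝ :=
  (∑ i, β i • Matrix.vecMulVec (x i) (x i)) - Matrix.vecMulVec (mVec x β) b
    - Matrix.vecMulVec b (mVec x β) + (∑ i, β i) • Matrix.vecMulVec b b

/-- The function `G(U, b)` from the M-step of the PCA-GMM EM algorithm. -/
noncomputable def gFun {d n N : ℕ} (σ : ℝ) (x : Fin N → Fin n → ℝ) (β : Fin N → ℝ)
    (U : Matrix (Fin n) (Fin d) ℝ) (b : Fin n → ℝ) : ℝ :=
  -(σ ^ 2)⁻¹ * ((Uᵀ * sMat x β b * U).trace - (vVec x β b ⬝ᵥ vVec x β b) / (∑ i, β i))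
    - vVec x β b ⬝ᵥ ((U * (Uᵀ * sMat x β b * U)⁻¹ * Uᵀ) *ᵥ vVec x β b)
    + (∑ i, β i) * Real.log (Uᵀ * sMat x β b * U).det

/-!
Write `c = m / α`, `w = b - c` and `u = Uᵀ w`. Then `S(b) = S(c) + α w wᵀ` and `v(b) = -α w`, so
`M = UᵀS(b)U` equals `A + α u uᵀ` with `A = UᵀS(c)U`, and the matrix determinant lemma gives
`det A = det M * (1 - α s)` for `s = uᵀ M⁻¹ u`. Hence
`G(U, b) - G(U, c) = (α / σ²) (‖w‖² - ‖u‖²) - α (log (1 - α s) + α s)`,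
which is nonnegative by Bessel's inequality and `log y ≤ y - 1`. So `b = c` is optimal for every
`U`, and it remains to minimise the continuous function `U ↦ G(U, c)` over the compact Stiefel
manifold.
-/

namespace Matrix

variable {m n : Type*} [Fintype m]

theorem det_add_vecMulVec {R : Type*} [CommRing R] [Fintype n] [DecidableEq n] {M : Matrix n n R}
    (hM : IsUnit M.det) (u v : n → R) :
    (M + vecMulVec u v).det = M.det * (1 + v ⬝ᵥ (M⁻¹ *ᵥ u)) := by
  rw [vecMulVec_eq Unit, det_add_replicateCol_mul_replicateRow (ι := Unit) hM,
    det_unique (n := Unit), Matrix.mul_assoc, ← replicateCol_mulVec, add_apply, one_apply_eq,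
    replicateRow_mul_replicateCol_apply]

theorem log_det_sub_smul_vecMulVec_le [Fintype n] [DecidableEq n] {M : Matrix n n ℝ} {a : ℝ}
    {u : n → ℝ} (hM : M.PosDef) (hA : (M - a • vecMulVec u u).PosDef) :
    Real.log (M - a • vecMulVec u u).det ≤ Real.log M.det - a * (u ⬝ᵥ (M⁻¹ *ᵥ u)) := by
  have hdet : (M - a • vecMulVec u u).det = M.det * (1 - a * (u ⬝ᵥ (M⁻¹ *ᵥ u))) := by
    rw [sub_eq_add_neg, ← neg_smul, ← smul_vecMulVec, det_add_vecMulVec hM.det_pos.ne'.isUnit,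
      mulVec_smul, dotProduct_smul, smul_eq_mul, neg_mul, ← sub_eq_add_neg]
  have hfactor : 0 < 1 - a * (u ⬝ᵥ (M⁻¹ *ᵥ u)) :=
    pos_of_mul_pos_right (hdet ▸ hA.det_pos) hM.det_pos.le
  rw [hdet, Real.log_mul hM.det_pos.ne' hfactor.ne']
  linarith [Real.log_le_sub_one_of_pos hfactor]

theorem transpose_mul_vecMulVec_mul (U : Matrix m n ℝ) (w : m → ℝ) :
    Uᵀ * vecMulVec w w * U = vecMulVec (Uᵀ *ᵥ w) (Uᵀ *ᵥ w) := by
  rw [mul_vecMulVec, vecMulVec_mul, mulVec_transpose]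

variable {U : Matrix m n ℝ}

theorem mulVec_injective_of_transpose_mul_self_eq_one [Fintype n] [DecidableEq n]
    (hU : Uᵀ * U = 1) : Function.Injective U.mulVec :=
  Function.LeftInverse.injective (g := (Uᵀ *ᵥ ·)) fun z => by
    simp only [mulVec_mulVec, hU, one_mulVec]

theorem PosDef.transpose_mul_mul_of_transpose_mul_self_eq_one [Fintype n] [DecidableEq n]
    {S : Matrix m m ℝ} (hS : S.PosDef) (hU : Uᵀ * U = 1) : (Uᵀ * S * U).PosDef := by
  simpa using hS.conjTranspose_mul_mul_same (mulVec_injective_of_transpose_mul_self_eq_one hU)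

theorem dotProduct_transpose_mulVec_self_le [Fintype n] [DecidableEq n] (hU : Uᵀ * U = 1)
    (w : m → ℝ) : (Uᵀ *ᵥ w) ⬝ᵥ (Uᵀ *ᵥ w) ≤ w ⬝ᵥ w := by
  have hproj : (U *ᵥ (Uᵀ *ᵥ w)) ⬝ᵥ (U *ᵥ (Uᵀ *ᵥ w)) = (Uᵀ *ᵥ w) ⬝ᵥ (Uᵀ *ᵥ w) := by
    rw [dotProduct_mulVec, ← mulVec_transpose, mulVec_mulVec, hU, one_mulVec]
  have hcross : w ⬝ᵥ (U *ᵥ (Uᵀ *ᵥ w)) = (Uᵀ *ᵥ w) ⬝ᵥ (Uᵀ *ᵥ w) := by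
    rw [dotProduct_mulVec, ← mulVec_transpose]
  have hresidual := dotProduct_self_star_nonneg (w - U *ᵥ (Uᵀ *ᵥ w))
  simp only [star_trivial, sub_dotProduct, dotProduct_sub, dotProduct_comm _ w] at hresidual
  linarith

theorem isCompact_setOf_transpose_mul_self_eq_one [DecidableEq n] :
    IsCompact {U : Matrix m n ℝ | Uᵀ * U = 1} := by
  refine IsCompact.of_isClosed_subset
    (isCompact_univ_pi fun _ => isCompact_univ_pi fun _ => isCompact_Icc (a := -1) (b := 1))
    (isClosed_eq (continuous_id.matrix_transpose.matrix_mul continuous_id) continuous_const) ?_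
  intro U hU i _ j _
  have hcol : ∑ k, U k j ^ 2 = 1 := by
    simpa [mul_apply, sq] using congrFun (congrFun hU j) j
  have hentry : U i j ^ 2 ≤ 1 :=
    hcol ▸ Finset.single_le_sum (fun k _ => sq_nonneg (U k j)) (Finset.mem_univ i)
  exact abs_le.mp (sq_le_one_iff_abs_le_one _ |>.mp hentry)

theorem transpose_mul_self_submatrix_one [DecidableEq m] [DecidableEq n] (e : n ↪ m) :
    ((1 : Matrix m m ℝ).submatrix id e)ᵀ * (1 : Matrix m m ℝ).submatrix id e = 1 := by
  rw [transpose_submatrix, transpose_one, ← submatrix_mul _ _ _ _ _ Function.bijective_id,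
    Matrix.one_mul, submatrix_one_embedding]

end Matrix

noncomputable def weightedMean {n N : ℕ} (x : Fin N → Fin n → ℝ) (β : Fin N → ℝ) : Fin n → ℝ :=
  (∑ i, β i)⁻¹ • mVec x β

section WeightedData

variable {n N : ℕ} {x : Fin N → Fin n → ℝ} {β : Fin N → ℝ}

theorem sum_pos_of_posDef_sMat (hn : 0 < n) (hβ : ∀ i, 0 < β i) {b : Fin n → ℝ}
    (hS : (sMat x β b).PosDef) : 0 < ∑ i, β i := by
  have : Nonempty (Fin n) := Fin.pos_iff_nonempty.mp hn
  obtain ⟨i⟩ : Nonempty (Fin N) := by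
    by_contra hN
    rw [not_nonempty_iff] at hN
    have h0 : sMat x β b = 0 := by ext; simp [sMat, mVec]
    exact hS.det_pos.ne' (by rw [h0, det_zero])
  exact Finset.sum_pos (fun i _ => hβ i) ⟨i, Finset.mem_univ i⟩

theorem sMat_eq_add (hα : ∑ i, β i ≠ 0) (b : Fin n → ℝ) :
    sMat x β b = sMat x β (weightedMean x β)
      + (∑ i, β i) • vecMulVec (b - weightedMean x β) (b - weightedMean x β) := by
  ext i j
  simp only [sMat, weightedMean, Matrix.add_apply, Matrix.sub_apply, Matrix.smul_apply,
    vecMulVec_apply, Pi.sub_apply, Pi.smul_apply, smul_eq_mul]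
  field_simp
  ring

theorem vVec_eq_smul (hα : ∑ i, β i ≠ 0) (b : Fin n → ℝ) :
    vVec x β b = -(∑ i, β i) • (b - weightedMean x β) := by
  ext i
  simp only [vVec, weightedMean, Pi.sub_apply, Pi.smul_apply, smul_eq_mul]
  field_simp
  ring

theorem gFun_weightedMean (hα : ∑ i, β i ≠ 0) {d : ℕ} (σ : ℝ) (U : Matrix (Fin n) (Fin d) ℝ) :
    gFun σ x β U (weightedMean x β) = -(σ ^ 2)⁻¹ * (Uᵀ * sMat x β (weightedMean x β) * U).trace
      + (∑ i, β i) * Real.log (Uᵀ * sMat x β (weightedMean x β) * U).det := by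
  simp [gFun, vVec_eq_smul hα]

theorem gFun_weightedMean_le (hα : 0 < ∑ i, β i) {d : ℕ} (σ : ℝ) {U : Matrix (Fin n) (Fin d) ℝ}
    (hU : Uᵀ * U = 1) (hc : (sMat x β (weightedMean x β)).PosDef) {b : Fin n → ℝ}
    (hb : (sMat x β b).PosDef) :
    gFun σ x β U (weightedMean x β) ≤ gFun σ x β U b := by
  set α := ∑ i, β i
  set w := b - weightedMean x β
  set u := Uᵀ *ᵥ w
  set A := Uᵀ * sMat x β (weightedMean x β) * U
  set M := Uᵀ * sMat x β b * U with hMdef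
  have hM : M = A + α • vecMulVec u u := by
    rw [hMdef, sMat_eq_add hα.ne' b, Matrix.mul_add, Matrix.add_mul,
      Matrix.mul_smul, Matrix.smul_mul, transpose_mul_vecMulVec_mul]
  have hv : vVec x β b = -α • w := vVec_eq_smul hα.ne' b
  have htrace : M.trace = A.trace + α * (u ⬝ᵥ u) := by
    rw [hM, trace_add, trace_smul, trace_vecMulVec, smul_eq_mul]
  have hquad : vVec x β b ⬝ᵥ ((U * M⁻¹ * Uᵀ) *ᵥ vVec x β b) = α ^ 2 * (u ⬝ᵥ (M⁻¹ *ᵥ u)) := by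
    rw [hv, ← mulVec_mulVec, ← mulVec_mulVec, dotProduct_mulVec, ← mulVec_transpose]
    simp only [mulVec_smul, smul_dotProduct, dotProduct_smul, smul_eq_mul]
    ring
  have hnorm : vVec x β b ⬝ᵥ vVec x β b / α = α * (w ⬝ᵥ w) := by
    rw [hv, smul_dotProduct, dotProduct_smul, smul_eq_mul, smul_eq_mul]
    field_simp
  have hlog : Real.log A.det ≤ Real.log M.det - α * (u ⬝ᵥ (M⁻¹ *ᵥ u)) := by
    have hA : A = M - α • vecMulVec u u := by rw [hM, add_sub_cancel_right]
    rw [hA]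
    exact log_det_sub_smul_vecMulVec_le (hb.transpose_mul_mul_of_transpose_mul_self_eq_one hU)
      (hA ▸ hc.transpose_mul_mul_of_transpose_mul_self_eq_one hU)
  have hbessel : u ⬝ᵥ u ≤ w ⬝ᵥ w := dotProduct_transpose_mulVec_self_le hU w
  have hlog_scaled := mul_le_mul_of_nonneg_left hlog hα.le
  have hproj :=
    mul_nonneg (inv_nonneg.mpr (sq_nonneg σ)) (mul_nonneg hα.le (sub_nonneg.mpr hbessel))
  rw [gFun_weightedMean hα.ne', gFun, ← hMdef, htrace, hquad, hnorm]
  nlinarith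

theorem continuousOn_gFun_weightedMean (hα : ∑ i, β i ≠ 0) {d : ℕ} (σ : ℝ)
    (hc : (sMat x β (weightedMean x β)).PosDef) :
    ContinuousOn (fun U : Matrix (Fin n) (Fin d) ℝ => gFun σ x β U (weightedMean x β))
      {U | Uᵀ * U = 1} := by
  simp only [gFun_weightedMean hα]
  have hA :
      Continuous fun U : Matrix (Fin n) (Fin d) ℝ => Uᵀ * sMat x β (weightedMean x β) * U :=
    (continuous_id.matrix_transpose.matrix_mul continuous_const).matrix_mul continuous_id
  refine (continuous_const.mul hA.matrix_trace).continuousOn.add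
    (continuousOn_const.mul (hA.matrix_det.continuousOn.log fun U hU => ?_))
  exact (hc.transpose_mul_mul_of_transpose_mul_self_eq_one hU).det_pos.ne'

end WeightedData

theorem stmt_15_general (d n N : ℕ) (hn : 0 < n) (hdn : d ≤ n)
    (σ : ℝ)
    (x : Fin N → Fin n → ℝ) (β : Fin N → ℝ) (hβ : ∀ i, 0 < β i)
    (hSpos : ∀ b : Fin n → ℝ, (sMat x β b).PosDef) :
    ∃ (Uhat : Matrix (Fin n) (Fin d) ℝ) (bhat : Fin n → ℝ), Uhatᵀ * Uhat = 1 ∧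
      ∀ (U : Matrix (Fin n) (Fin d) ℝ) (b : Fin n → ℝ), Uᵀ * U = 1 →
        gFun σ x β Uhat bhat ≤ gFun σ x β U b := by
  have hα := sum_pos_of_posDef_sMat hn hβ (hSpos 0)
  have hc := hSpos (weightedMean x β)
  obtain ⟨Uhat, hUhat, hmin⟩ := isCompact_setOf_transpose_mul_self_eq_one.exists_isMinOn
    ⟨_, transpose_mul_self_submatrix_one (Fin.castLEEmb hdn)⟩
    (continuousOn_gFun_weightedMean hα.ne' σ hc)
  exact ⟨Uhat, weightedMean x β, hUhat, fun U b hU =>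
    (hmin hU).trans (gFun_weightedMean_le hα σ hU hc (hSpos b))⟩

theorem stmt_15 (d n N : ℕ) (hd : 0 < d) (hn : 0 < n) (hdn : d ≤ n)
    (σ : ℝ) (hσ : 0 < σ)
    (x : Fin N → Fin n → ℝ) (β : Fin N → ℝ) (hβ : ∀ i, 0 < β i)
    (hSpos : ∀ b : Fin n → ℝ, (sMat x β b).PosDef) :
    ∃ (Uhat : Matrix (Fin n) (Fin d) ℝ) (bhat : Fin n → ℝ), Uhatᵀ * Uhat = 1 ∧
      ∀ (U : Matrix (Fin n) (Fin d) ℝ) (b : Fin n → ℝ), Uᵀ * U = 1 →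
        gFun σ x β Uhat bhat ≤ gFun σ x β U b :=
  stmt_15_general d n N hn hdn σ x β hβ hSpos
end
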